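/- arXiv:math/0102098 — 6 statements merged into one kernel-verified Lean document; each statement's English description precedes it below -/
import Mathlib

section
/- For every n ≥ 2 and every symmetric polynomial f in n−1 variables over ℂ (i.e. f is invariant under every permutation of its variables), the evaluation f(m(2), …, m(n)) — which is well defined since the Jucys–Murphy elements commute pairwise — lies in the center of the group algebra ℂ[Sₙ]. -/
/-!
Adjacent transpositions generate `Sₙ`, so it suffices that `s = (k k+1)` commutes with
`f(m(2), …, m(n))`. For `k = 1` this holds because `s = m(2)`. For `k ≥ 2`, `s` commutes with every
`m(j)` with `j ≠ k, k + 1`, while `s m(k) = m(k+1) s - 1` and `s m(k+1) = m(k) s + 1`.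
Writing `σ` for the swap of the two corresponding variables, the twisted commutator
`δ g = s g(m) - (σ g)(m) s` then obeys `δ (g h) = δ g · h(m) + (σ g)(m) · δ h`, and induction on `g`
gives `δ g = q(m)` for the divided difference `q = (g - σ g) / (x_{k+1} - x_k)`, a polynomial.
For symmetric `f` the divided difference vanishes, so `s` commutes with `f(m)`.
-/

/-- The Jucys–Murphy element `m(j) = ∑_{i=1}^{j-1} (i j)` in the group algebra
`ℂ[Sₙ]`, where positions are numbered `1, …, n` (position `p` corresponds to
`p - 1 : Fin n`).  For `j` out of the range `1 ≤ j ≤ n` we set it to `0`. -/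
noncomputable def jucysMurphy (n j : ℕ) : MonoidAlgebra ℂ (Equiv.Perm (Fin n)) :=
  if h : 1 ≤ j ∧ j ≤ n then
    ∑ i ∈ Finset.univ.filter (fun i : Fin n => (i : ℕ) + 1 < j),
      MonoidAlgebra.of ℂ (Equiv.Perm (Fin n)) (Equiv.swap i ⟨j - 1, by omega⟩)
  else 0

/-- Evaluation of a multivariate polynomial `f` in `n - 1` variables at the
(pairwise commuting) Jucys–Murphy elements `m(2), …, m(n)`: the variable
indexed by `i : Fin (n-1)` is sent to `m(i+2)`.  Since the elements commute,
taking the products of the powers in the fixed order of `Fin (n-1)` gives the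
usual evaluation. -/
noncomputable def evalJucysMurphy (n : ℕ) (f : MvPolynomial (Fin (n - 1)) ℂ) :
    MonoidAlgebra ℂ (Equiv.Perm (Fin n)) :=
  ∑ d ∈ f.support, f.coeff d •
    ((List.finRange (n - 1)).map (fun (i : Fin (n - 1)) => jucysMurphy n (i.val + 2) ^ d i)).prod

open Finset Equiv MvPolynomial MonoidAlgebra

section DividedDifference

variable {K A ι : Type*} [CommRing K] [Ring A] [Algebra K A] [DecidableEq ι]
  (φ : MvPolynomial ι K →ₐ[K] A) {s : A} {u v : ι}

theorem exists_dividedDifference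
    (hu : s * φ (X u) = φ (X v) * s - 1) (hv : s * φ (X v) = φ (X u) * s + 1)
    (hw : ∀ w, w ≠ u → w ≠ v → Commute s (φ (X w))) (g : MvPolynomial ι K) :
    ∃ q, s * φ g - φ (rename (swap u v) g) * s = φ q ∧
      q * (X v - X u) = g - rename (swap u v) g := by
  induction g using MvPolynomial.induction_on with
  | C a => exact ⟨0, by simp [Algebra.commutes]⟩
  | add g h ihg ihh =>
    obtain ⟨p, hp, hp'⟩ := ihg
    obtain ⟨q, hq, hq'⟩ := ihh
    refine ⟨p + q, ?_, ?_⟩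
    · simp only [map_add, ← hp, ← hq]; noncomm_ring
    · rw [map_add, add_mul, hp', hq']; ring
  | mul_X g w ih =>
    obtain ⟨p, hp, hp'⟩ := ih
    obtain ⟨q, hq, hq'⟩ : ∃ q, s * φ (X w) - φ (rename (swap u v) (X w)) * s = φ q ∧
        q * (X v - X u) = X w - rename (swap u v) (X w) := by
      rw [rename_X]
      by_cases hwu : w = u
      · subst hwu; exact ⟨-1, by rw [swap_apply_left, hu]; simp, by simp⟩
      by_cases hwv : w = v
      · subst hwv; exact ⟨1, by rw [swap_apply_right, hv]; simp, by simp⟩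
      · rw [swap_apply_of_ne_of_ne hwu hwv]
        exact ⟨0, by simp [(hw w hwu hwv).eq], by simp⟩
    refine ⟨p * X w + rename (swap u v) g * q, ?_, ?_⟩
    · simp only [map_mul, map_add, ← hp, ← hq]; noncomm_ring
    · rw [add_mul, mul_right_comm, hp', mul_assoc, hq', map_mul]; ring

theorem commute_of_rename_swap_eq [IsDomain K] (huv : u ≠ v)
    (hu : s * φ (X u) = φ (X v) * s - 1) (hv : s * φ (X v) = φ (X u) * s + 1)
    (hw : ∀ w, w ≠ u → w ≠ v → Commute s (φ (X w))) {g : MvPolynomial ι K}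
    (hg : rename (swap u v) g = g) : Commute s (φ g) := by
  obtain ⟨q, hq, hq'⟩ := exists_dividedDifference φ hu hv hw g
  rw [hg, sub_self] at hq'
  have hX : (X v - X u : MvPolynomial ι K) ≠ 0 := sub_ne_zero.2 (X_injective.ne huv.symm)
  rw [hg, (mul_eq_zero.1 hq').resolve_right hX, map_zero, sub_eq_zero] at hq
  exact hq

end DividedDifference

theorem MvPolynomial.algHom_apply_eq_sum_list_prod {R A : Type*} [CommSemiring R] [Semiring A]
    [Algebra R A] {n : ℕ} (φ : MvPolynomial (Fin n) R →ₐ[R] A) (f : MvPolynomial (Fin n) R) :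
    φ f = ∑ d ∈ f.support, f.coeff d • ((List.finRange n).map fun i => φ (X i) ^ d i).prod := by
  conv_lhs => rw [f.as_sum, map_sum]
  refine sum_congr rfl fun d _ => ?_
  rw [monomial_eq, ← smul_eq_C_mul, map_smul, Finsupp.prod_fintype _ _ (by simp),
    Fin.prod_univ_def, map_list_prod, List.map_map]
  simp [Function.comp_def]

theorem MonoidAlgebra.mem_center_of_forall_commute_of {k G : Type*} [CommSemiring k] [Monoid G]
    {x : MonoidAlgebra k G} (h : ∀ g, Commute (of k G g) x) :
    x ∈ Subalgebra.center k (MonoidAlgebra k G) := by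
  rw [Subalgebra.mem_center_iff]
  intro z
  induction z using MonoidAlgebra.induction_on with
  | of g => exact h g
  | add a b ha hb => rw [add_mul, mul_add, ha, hb]
  | smul r a ha => rw [smul_mul_assoc, mul_smul_comm, ha]

theorem commute_of_forall_swap_castSucc_succ {n : ℕ} {M : Type*} [Monoid M]
    (φ : Perm (Fin (n + 1)) →* M) {x : M}
    (h : ∀ i : Fin n, Commute (φ (swap i.castSucc i.succ)) x) (σ : Perm (Fin (n + 1))) :
    Commute (φ σ) x := by
  have hσ : σ ∈ Submonoid.closure (Set.range fun i : Fin n => swap i.castSucc i.succ) := by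
    rw [Perm.mclosure_swap_castSucc_succ]; trivial
  induction hσ using Submonoid.closure_induction with
  | mem _ hτ => obtain ⟨i, rfl⟩ := hτ; exact h i
  | one => rw [map_one]; exact Commute.one_left x
  | mul σ τ _ _ hσ hτ => rw [map_mul]; exact hσ.mul_left hτ

theorem Fin.filter_lt_succ_eq_insert {n : ℕ} (i : Fin n) :
    univ.filter (· < i.succ) = insert i.castSucc (univ.filter (· < i.castSucc)) := by
  ext j
  simp only [mem_filter, mem_univ, true_and, mem_insert, Fin.lt_def, Fin.ext_iff, Fin.val_succ,
    Fin.val_castSucc]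
  omega

section JucysMurphy

variable {n : ℕ}

theorem jucysMurphy_eq_sum (p : Fin n) :
    jucysMurphy n (p + 1) = ∑ i ∈ univ.filter (· < p), of ℂ _ (swap i p) := by
  rw [jucysMurphy, dif_pos ⟨by omega, p.isLt⟩]
  simp only [Nat.add_lt_add_iff_right, Fin.val_fin_lt, Nat.add_sub_cancel, Fin.eta]

theorem commute_of_jucysMurphy {σ : Perm (Fin n)} {p : Fin n} (hp : σ p = p)
    (hσ : ∀ i, σ i < p ↔ i < p) : Commute (of ℂ _ σ) (jucysMurphy n (p + 1)) := by
  rw [jucysMurphy_eq_sum, Commute, SemiconjBy, mul_sum, sum_mul]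
  refine sum_equiv σ (by simp [hσ]) fun i _ => ?_
  rw [← map_mul, ← map_mul, mul_swap_eq_swap_mul, hp]

theorem commute_swap_jucysMurphy {a b p : Fin n} (h : a < p ∧ b < p ∨ p < a ∧ p < b) :
    Commute (of ℂ _ (swap a b)) (jucysMurphy n (p + 1)) := by
  refine commute_of_jucysMurphy (swap_apply_of_ne_of_ne ?_ ?_) fun i => ?_
  · rintro rfl; simp at h
  · rintro rfl; simp at h
  · rw [swap_apply_def]
    split_ifs with hia hib
    · subst hia; simp only [Fin.lt_def] at h ⊢; omega
    · subst hib; simp only [Fin.lt_def] at h ⊢; omega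
    · rfl

theorem jucysMurphy_commute (p q : Fin n) :
    Commute (jucysMurphy n (p + 1)) (jucysMurphy n (q + 1)) := by
  wlog hpq : p < q generalizing p q
  · rcases (not_lt.1 hpq).lt_or_eq with h | rfl
    exacts [(this q p h).symm, Commute.refl _]
  rw [jucysMurphy_eq_sum p]
  exact Commute.sum_left _ _ _ fun i hi =>
    commute_swap_jucysMurphy (Or.inl ⟨(mem_filter.1 hi).2.trans hpq, hpq⟩)

theorem of_swap_mul_jucysMurphy (i : Fin n) :
    of ℂ _ (swap i.castSucc i.succ) * jucysMurphy (n + 1) (i.castSucc + 1) =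
      jucysMurphy (n + 1) (i.succ + 1) * of ℂ _ (swap i.castSucc i.succ) - 1 := by
  rw [jucysMurphy_eq_sum, jucysMurphy_eq_sum, Fin.filter_lt_succ_eq_insert,
    sum_insert (by simp), add_mul, ← map_mul, swap_mul_self, map_one, add_sub_cancel_left,
    mul_sum, sum_mul]
  refine sum_congr rfl fun j hj => ?_
  have hj : j < i.castSucc := (mem_filter.1 hj).2
  rw [← map_mul, ← map_mul, mul_swap_eq_swap_mul, swap_apply_left,
    swap_apply_of_ne_of_ne hj.ne (hj.trans i.castSucc_lt_succ).ne]

theorem of_swap_mul_jucysMurphy_succ (i : Fin n) :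
    of ℂ _ (swap i.castSucc i.succ) * jucysMurphy (n + 1) (i.succ + 1) =
      jucysMurphy (n + 1) (i.castSucc + 1) * of ℂ _ (swap i.castSucc i.succ) + 1 := by
  rw [jucysMurphy_eq_sum, jucysMurphy_eq_sum, Fin.filter_lt_succ_eq_insert,
    sum_insert (by simp), mul_add, ← map_mul, swap_mul_self, map_one,
    add_comm (1 : MonoidAlgebra ℂ _), mul_sum, sum_mul]
  congr 1
  refine sum_congr rfl fun j hj => ?_
  have hj : j < i.castSucc := (mem_filter.1 hj).2
  rw [← map_mul, ← map_mul, mul_swap_eq_swap_mul, swap_apply_right,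
    swap_apply_of_ne_of_ne hj.ne (hj.trans i.castSucc_lt_succ).ne]

theorem jucysMurphy_two :
    jucysMurphy (n + 2) ((0 : Fin (n + 1)).succ + 1) =
      of ℂ _ (swap (0 : Fin (n + 1)).castSucc (0 : Fin (n + 1)).succ) := by
  rw [jucysMurphy_eq_sum, Fin.filter_lt_succ_eq_insert]
  simp

end JucysMurphy

section Evaluation

open scoped IsMulCommutative

variable (n : ℕ)

/-- Evaluation at `m(2), …, m(n + 1)`, through the commutative subalgebra they generate. -/
noncomputable def jucysMurphyEval :
    MvPolynomial (Fin n) ℂ →ₐ[ℂ] MonoidAlgebra ℂ (Perm (Fin (n + 1))) :=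
  let S := Algebra.adjoin ℂ (Set.range fun i : Fin n => jucysMurphy (n + 1) (i.succ + 1))
  haveI : IsMulCommutative S := Algebra.isMulCommutative_adjoin ℂ <| by
    rintro _ ⟨i, rfl⟩ _ ⟨j, rfl⟩; exact jucysMurphy_commute _ _
  S.val.comp (aeval (S₁ := S) fun i => ⟨_, Algebra.subset_adjoin ⟨i, rfl⟩⟩)

variable {n}

theorem jucysMurphyEval_X (i : Fin n) :
    jucysMurphyEval n (X i) = jucysMurphy (n + 1) (i.succ + 1) := by
  simp [jucysMurphyEval]

theorem evalJucysMurphy_eq_jucysMurphyEval (f : MvPolynomial (Fin (n + 1)) ℂ) :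
    evalJucysMurphy (n + 2) f = jucysMurphyEval (n + 1) f := by
  rw [algHom_apply_eq_sum_list_prod]
  simp only [jucysMurphyEval_X]
  rfl

end Evaluation

/-- For every `n ≥ 2` and every symmetric polynomial `f` in `n - 1` variables
over `ℂ`, the evaluation `f(m(2), …, m(n))` at the Jucys–Murphy elements lies
in the center of the group algebra `ℂ[Sₙ]`. -/
theorem evalJucysMurphy_mem_center (n : ℕ) (hn : 2 ≤ n)
    (f : MvPolynomial (Fin (n - 1)) ℂ) (hf : f.IsSymmetric) :
    evalJucysMurphy n f ∈
      Subalgebra.center ℂ (MonoidAlgebra ℂ (Equiv.Perm (Fin n))) := by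
  obtain ⟨m, rfl⟩ : ∃ m, n = m + 2 := ⟨n - 2, by omega⟩
  rw [evalJucysMurphy_eq_jucysMurphyEval]
  refine mem_center_of_forall_commute_of (commute_of_forall_swap_castSucc_succ _ fun i => ?_)
  rcases Fin.eq_zero_or_eq_succ i with rfl | ⟨j, rfl⟩
  · rw [← jucysMurphy_two, ← jucysMurphyEval_X]
    exact (Commute.all _ _).map _
  · refine commute_of_rename_swap_eq _ (u := j.castSucc) (v := j.succ)
      Fin.castSucc_lt_succ.ne ?_ ?_ ?_ (hf _)
    · rw [jucysMurphyEval_X, jucysMurphyEval_X, Fin.succ_castSucc]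
      exact of_swap_mul_jucysMurphy _
    · rw [jucysMurphyEval_X, jucysMurphyEval_X, Fin.succ_castSucc]
      exact of_swap_mul_jucysMurphy_succ _
    · intro w hwu hwv
      rw [jucysMurphyEval_X]
      apply commute_swap_jucysMurphy
      simp only [Fin.lt_def, ne_eq, Fin.ext_iff, Fin.val_succ, Fin.val_castSucc] at hwu hwv ⊢
      omega
end

section
/- For every m ≥ 1 and every n ≥ 2, the power sum ∑_{j=2}^{n} m(j)^m of the Jucys–Murphy elements lies in the center of the group algebra ℂ[Sₙ]. -/
/-!
Write `sₜ` for the adjacent transposition `(t t+1)`.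
Conjugating the summands of `m(j)` by a permutation `g` permutes them as soon as `g` fixes `j` and
preserves `{1, …, j - 1}`; hence `sₜ` commutes with `m(j)` for `j ≠ t, t + 1`, and `m(t)` commutes
with `m(t + 1)`. Moreover `sₜ m(t) = m(t + 1) sₜ - 1`, so `sₜ` commutes with `m(t) + m(t + 1)` and
with `m(t) m(t + 1)`, hence with every power sum `m(t)ᵏ + m(t + 1)ᵏ`. Since the `sₜ` generate `Sₙ`,
`∑ⱼ m(j)ᵏ` is central, and the summand `m(1) = 0` is irrelevant.
-/

open Equiv Finset MonoidAlgebra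

theorem commute_pow_add_pow_of_mul_eq_mul_sub_one {R : Type*} [Ring R] {s a b : R}
    (hs : s * s = 1) (hab : Commute a b) (h : s * a = b * s - 1) (m : ℕ) :
    Commute s (a ^ m + b ^ m) := by
  have h' : s * b = a * s + 1 := by
    have hb : b = s * a * s + s := by
      rw [h, sub_mul, mul_assoc, hs, mul_one, one_mul, sub_add_cancel]
    rw [hb, mul_add, ← mul_assoc, ← mul_assoc, hs, one_mul]
  have hsum : Commute s (a + b) := by
    rw [Commute, SemiconjBy, mul_add, h, h']
    noncomm_ring
  have hprod : Commute s (a * b) := by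
    rw [Commute, SemiconjBy, ← mul_assoc, h, sub_mul, mul_assoc, h', mul_add, mul_one,
      ← mul_assoc, hab.eq]
    noncomm_ring
  -- Newton's recursion `pₘ₊₂ = (a + b) pₘ₊₁ - a b pₘ` for the power sums of commuting `a`, `b`
  have newton (m : ℕ) : a ^ (m + 2) + b ^ (m + 2)
      = (a + b) * (a ^ (m + 1) + b ^ (m + 1)) - a * b * (a ^ m + b ^ m) := by
    have hba : b * a ^ (m + 1) = a * b * a ^ m := by rw [pow_succ', ← mul_assoc, hab.eq]
    have hab' : a * b ^ (m + 1) = a * b * b ^ m := by rw [pow_succ', mul_assoc]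
    rw [add_mul, mul_add, mul_add, mul_add, hba, hab', ← pow_succ', ← pow_succ']
    abel
  induction m using Nat.twoStepInduction with
  | zero => simpa [one_add_one_eq_two] using Commute.ofNat_right s 2
  | one => simpa using hsum
  | more m ihm ihm1 => rw [newton]; exact (hsum.mul_right ihm1).sub_right (hprod.mul_right ihm)

theorem Finset.map_swap_eq_self {α : Type*} [DecidableEq α] {s : Finset α} {a b : α}
    (h : a ∈ s ↔ b ∈ s) :
    s.map (swap a b).toEmbedding = s := by
  ext i
  rw [Finset.mem_map_equiv, symm_swap, swap_apply_def]
  split_ifs with hia hib <;> simp_all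

theorem MonoidAlgebra.mem_center_of_commute_of_closure_eq_top {k G : Type*} [CommSemiring k]
    [Monoid G] {S : Set G} (hS : Submonoid.closure S = ⊤) {z : MonoidAlgebra k G}
    (hz : ∀ g ∈ S, Commute (of k G g) z) : z ∈ Subalgebra.center k (MonoidAlgebra k G) := by
  have hof (g : G) : Commute (of k G g) z := by
    have hg : g ∈ Submonoid.closure S := hS ▸ Submonoid.mem_top g
    induction hg using Submonoid.closure_induction with
    | mem g hg => exact hz g hg
    | one => simp
    | mul g g' _ _ hg hg' => simpa using hg.mul_left hg'
  rw [Subalgebra.mem_center_iff]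
  intro b
  induction b using MonoidAlgebra.induction_on with
  | of g => exact hof g
  | add f g hf hg => rw [add_mul, mul_add, hf, hg]
  | smul r f hf => rw [smul_mul_assoc, mul_smul_comm, hf]

section SwapSum

variable (k : Type*) {α : Type*} [CommSemiring k] [DecidableEq α]

noncomputable def swapSum (s : Finset α) (x : α) : MonoidAlgebra k (Perm α) :=
  ∑ i ∈ s, of k (Perm α) (swap i x)

variable {k}

theorem of_mul_swapSum (g : Perm α) (s : Finset α) (x : α) :
    of k (Perm α) g * swapSum k s x
      = swapSum k (s.map g.toEmbedding) (g x) * of k (Perm α) g := by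
  simp only [swapSum, Finset.mul_sum, Finset.sum_mul, Finset.sum_map, ← map_mul,
    mul_swap_eq_swap_mul, coe_toEmbedding]

theorem commute_of_swapSum {g : Perm α} {s : Finset α} {x : α}
    (hs : s.map g.toEmbedding = s) (hx : g x = x) :
    Commute (of k (Perm α) g) (swapSum k s x) := by
  rw [Commute, SemiconjBy, of_mul_swapSum, hs, hx]

theorem swapSum_insert {s : Finset α} {a : α} (ha : a ∉ s) (x : α) :
    swapSum k (insert a s) x = of k (Perm α) (swap a x) + swapSum k s x :=
  Finset.sum_insert ha

end SwapSum

theorem jucysMurphy_succ (n j : ℕ) (h : j < n) :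
    jucysMurphy n (j + 1) = swapSum ℂ (Iio ⟨j, h⟩) ⟨j, h⟩ := by
  rw [jucysMurphy, dif_pos (by omega), swapSum]
  refine sum_congr ?_ fun _ _ => rfl
  ext i
  simp [Fin.lt_def]

theorem sum_Icc_one_jucysMurphy_pow (n m : ℕ) :
    ∑ j ∈ Icc 1 n, jucysMurphy n j ^ m = ∑ c : Fin n, swapSum ℂ (Iio c) c ^ m := by
  calc ∑ j ∈ Icc 1 n, jucysMurphy n j ^ m = ∑ j ∈ range n, jucysMurphy n (j + 1) ^ m := by
        rw [range_eq_Ico, sum_Ico_add' (fun j => jucysMurphy n j ^ m), zero_add,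
          Finset.Ico_add_one_right_eq_Icc]
    _ = ∑ c : Fin n, jucysMurphy n (c + 1) ^ m := (Fin.sum_univ_eq_sum_range _ n).symm
    _ = ∑ c : Fin n, swapSum ℂ (Iio c) c ^ m :=
      sum_congr rfl fun c _ => by rw [jucysMurphy_succ n c c.isLt]

namespace Fin

theorem Iio_succ_eq_insert_castSucc {n : ℕ} (t : Fin n) :
    Iio t.succ = insert t.castSucc (Iio t.castSucc) := by
  ext i
  simp only [mem_Iio, mem_insert, Fin.lt_def, Fin.ext_iff, Fin.val_succ, Fin.val_castSucc]
  omega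

end Fin

section Coxeter

variable {k : Type*} {n : ℕ}

theorem of_swap_mul_swapSum_Iio_castSucc [CommRing k] (t : Fin n) :
    of k _ (swap t.castSucc t.succ) * swapSum k (Iio t.castSucc) t.castSucc
      = swapSum k (Iio t.succ) t.succ * of k _ (swap t.castSucc t.succ) - 1 := by
  rw [of_mul_swapSum, map_swap_eq_self (by simp [Fin.lt_def]), swap_apply_left,
    Fin.Iio_succ_eq_insert_castSucc, swapSum_insert (by simp), add_mul, ← map_mul,
    swap_mul_self, map_one, add_sub_cancel_left]

theorem commute_swapSum_Iio_castSucc_succ [CommSemiring k] (t : Fin n) :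
    Commute (swapSum k (Iio t.castSucc) t.castSucc) (swapSum k (Iio t.succ) t.succ) := by
  refine Commute.sum_left _ _ _ fun i hi => ?_
  have hit : i < t.succ := (mem_Iio.1 hi).trans Fin.castSucc_lt_succ
  refine commute_of_swapSum (map_swap_eq_self ?_) (swap_apply_of_ne_of_ne hit.ne' ?_)
  · simp [hit]
  · exact Fin.castSucc_lt_succ.ne'

theorem commute_of_swap_swapSum_Iio [CommSemiring k] (t : Fin n) {c : Fin (n + 1)}
    (h₁ : c ≠ t.castSucc) (h₂ : c ≠ t.succ) : Commute (of k _ (swap t.castSucc t.succ)) (swapSum k (Iio c) c) := by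
  refine commute_of_swapSum (map_swap_eq_self ?_) (swap_apply_of_ne_of_ne h₁ h₂)
  simp only [mem_Iio, Fin.lt_def, Fin.val_succ, Fin.val_castSucc]
  simp only [ne_eq, Fin.ext_iff, Fin.val_succ, Fin.val_castSucc] at h₁ h₂
  omega

theorem commute_of_swap_sum_pow_swapSum_Iio [CommRing k] (t : Fin n) (m : ℕ) :
    Commute (of k _ (swap t.castSucc t.succ)) (∑ c, swapSum k (Iio c) c ^ m) := by
  rw [← sum_add_sum_compl {t.castSucc, t.succ}, sum_pair (Fin.castSucc_lt_succ (i := t)).ne]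
  refine .add_right (commute_pow_add_pow_of_mul_eq_mul_sub_one
    (by rw [← map_mul, swap_mul_self, map_one])
    (commute_swapSum_Iio_castSucc_succ t) (of_swap_mul_swapSum_Iio_castSucc t) m) ?_
  refine Commute.sum_right _ _ _ fun c hc => (commute_of_swap_swapSum_Iio t ?_ ?_).pow_right m
  all_goals simp_all

theorem sum_pow_swapSum_Iio_mem_center [CommRing k] (n m : ℕ) :
    ∑ c : Fin n, swapSum k (Iio c) c ^ m ∈
      Subalgebra.center k (MonoidAlgebra k (Perm (Fin n))) := by
  rcases n with _ | n
  · simp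
  refine mem_center_of_commute_of_closure_eq_top (Perm.mclosure_swap_castSucc_succ n) ?_
  rintro _ ⟨t, rfl⟩
  exact commute_of_swap_sum_pow_swapSum_Iio t m

end Coxeter

theorem sum_pow_jucysMurphy_mem_center_general (m n : ℕ) :
    (∑ j ∈ Finset.Icc 2 n, jucysMurphy n j ^ m) ∈
      Subalgebra.center ℂ (MonoidAlgebra ℂ (Equiv.Perm (Fin n))) := by
  rcases n with _ | n
  · simp
  have hsplit : ∑ j ∈ Icc 2 (n + 1), jucysMurphy (n + 1) j ^ m
      = ∑ j ∈ Icc 1 (n + 1), jucysMurphy (n + 1) j ^ m - jucysMurphy (n + 1) 1 ^ m := by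
    rw [← insert_Icc_add_one_left_eq_Icc (Nat.le_add_left 1 n), sum_insert (by simp),
      add_sub_cancel_left]
    rfl
  have hone : jucysMurphy (n + 1) 1 = 0 := by simp [jucysMurphy]
  rw [hsplit, sum_Icc_one_jucysMurphy_pow, hone]
  exact sub_mem (sum_pow_swapSum_Iio_mem_center _ m) (pow_mem (zero_mem _) m)

/-- For every `m ≥ 1` and `n ≥ 2`, the power sum `∑_{j=2}^{n} m(j)^m` of the
Jucys–Murphy elements lies in the center of the group algebra `ℂ[Sₙ]`. -/
theorem sum_pow_jucysMurphy_mem_center (m n : ℕ) (hm : 1 ≤ m) (hn : 2 ≤ n) :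
    (∑ j ∈ Finset.Icc 2 n, jucysMurphy n j ^ m) ∈
      Subalgebra.center ℂ (MonoidAlgebra ℂ (Equiv.Perm (Fin n))) :=
  sum_pow_jucysMurphy_mem_center_general m n
end

section
/- (Ram) In the Hecke algebra Hₙ, for every 2 ≤ j ≤ n one has T(j) − 1 = z·M(j), where z = s − s⁻¹; that is, the Murphy operator M(j) is the linear combination (T(j) − 1)/(s − s⁻¹) of the single braid T(j) and the identity. -/
/-- The defining relations of the Hecke algebra `Hₙ` of type `A` over a
commutative ring `R` with invertible parameter `s` (and `z = s - s⁻¹`), imposed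
on the free `R`-algebra on generators `σ₁, …, σ_{n-1}` (indexed by `Fin (n-1)`,
so the generator `σ_k` corresponds to the index `k - 1`):
far-apart commutation, the braid relations, and the quadratic relations
`σᵢ² = z σᵢ + 1`. -/
inductive HeckeRel (R : Type*) [CommRing R] (s : Rˣ) (n : ℕ) :
    FreeAlgebra R (Fin (n - 1)) → FreeAlgebra R (Fin (n - 1)) → Prop
  | comm (i j : Fin (n - 1)) (h : (i : ℕ) + 2 ≤ (j : ℕ)) :
      HeckeRel R s n (FreeAlgebra.ι R i * FreeAlgebra.ι R j)
        (FreeAlgebra.ι R j * FreeAlgebra.ι R i)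
  | braid (i j : Fin (n - 1)) (h : (j : ℕ) = (i : ℕ) + 1) :
      HeckeRel R s n (FreeAlgebra.ι R i * FreeAlgebra.ι R j * FreeAlgebra.ι R i)
        (FreeAlgebra.ι R j * FreeAlgebra.ι R i * FreeAlgebra.ι R j)
  | quad (i : Fin (n - 1)) :
      HeckeRel R s n (FreeAlgebra.ι R i * FreeAlgebra.ι R i)
        (((s : R) - ((s⁻¹ : Rˣ) : R)) • FreeAlgebra.ι R i + 1)

/-- The Hecke algebra `Hₙ`: the quotient of the free `R`-algebra on
`σ₁, …, σ_{n-1}` by the two-sided ideal generated by the Hecke relations. -/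
abbrev Hecke (R : Type*) [CommRing R] (s : Rˣ) (n : ℕ) : Type _ :=
  RingQuot (HeckeRel R s n)

variable {R : Type*} [CommRing R]

/-- The generator `σ_{k+1}` of the Hecke algebra `Hₙ` (0-based index `k`, so
`heckeGen s n (k-1)` is the generator `σ_k` for `1 ≤ k ≤ n-1`); indices out of
range give `1`. -/
noncomputable def heckeGen (s : Rˣ) (n k : ℕ) : Hecke R s n :=
  if h : k < n - 1 then RingQuot.mkAlgHom R (HeckeRel R s n) (FreeAlgebra.ι R ⟨k, h⟩) else 1

/-- The ascending product `σ_i σ_{i+1} ⋯ σ_{j-1}` in `Hₙ` (1-based labels). -/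
noncomputable def ascProd (s : Rˣ) (n i j : ℕ) : Hecke R s n :=
  ((List.range (j - i)).map (fun t => heckeGen s n (i - 1 + t))).prod

/-- The descending product `σ_{j-1} σ_{j-2} ⋯ σ_i` in `Hₙ` (1-based labels). -/
noncomputable def descProd (s : Rˣ) (n i j : ℕ) : Hecke R s n :=
  (((List.range (j - i)).map (fun t => heckeGen s n (i - 1 + t))).reverse).prod

/-- The element `T(j) = (σ_{j-1} ⋯ σ₁)(σ₁ ⋯ σ_{j-1})` of `Hₙ`, with `T(1) = 1`. -/
noncomputable def heckeT (s : Rˣ) (n j : ℕ) : Hecke R s n :=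
  descProd s n 1 j * ascProd s n 1 j

/-- The positive permutation braid element
`ω_{(i j)} = σ_{j-1} ⋯ σ_{i+1} · σᵢ · σ_{i+1} ⋯ σ_{j-1}` of `Hₙ`, for
`1 ≤ i < j ≤ n` (for `j = i + 1` this is just `σᵢ`). -/
noncomputable def omegaBraid (s : Rˣ) (n i j : ℕ) : Hecke R s n :=
  descProd s n (i + 1) j * heckeGen s n (i - 1) * ascProd s n (i + 1) j

/-- The Murphy operator `M(j) = ∑_{i=1}^{j-1} ω_{(i j)}` in `Hₙ`. -/
noncomputable def murphyOp (s : Rˣ) (n j : ℕ) : Hecke R s n :=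
  ∑ i ∈ Finset.Ico 1 j, omegaBraid s n i j

lemma hecke_quad (s : Rˣ) (n k : ℕ) (hk : k < n - 1) :
    heckeGen s n k * heckeGen s n k
      = ((s : R) - ((s⁻¹ : Rˣ) : R)) • heckeGen s n k + 1 := by
  simp only [heckeGen, dif_pos hk]
  rw [← map_mul, RingQuot.mkAlgHom_rel R (HeckeRel.quad ⟨k, hk⟩)]
  simp

lemma ascProd_stop (s : Rˣ) (n i j : ℕ) (h : j ≤ i) : ascProd s n i j = 1 := by
  have : j - i = 0 := by omega
  simp [ascProd, this]

lemma descProd_stop (s : Rˣ) (n i j : ℕ) (h : j ≤ i) : descProd s n i j = 1 := by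
  have : j - i = 0 := by omega
  simp [descProd, this]

lemma ascProd_succ (s : Rˣ) (n i j : ℕ) (hi : 1 ≤ i) (hij : i ≤ j) :
    ascProd s n i (j + 1) = ascProd s n i j * heckeGen s n (j - 1) := by
  unfold ascProd
  have h1 : j + 1 - i = (j - i) + 1 := by omega
  have h2 : i - 1 + (j - i) = j - 1 := by omega
  rw [h1, List.range_succ, List.map_append, List.prod_append]
  simp [h2]

lemma descProd_succ (s : Rˣ) (n i j : ℕ) (hi : 1 ≤ i) (hij : i ≤ j) :
    descProd s n i (j + 1) = heckeGen s n (j - 1) * descProd s n i j := by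
  unfold descProd
  have h1 : j + 1 - i = (j - i) + 1 := by omega
  have h2 : i - 1 + (j - i) = j - 1 := by omega
  rw [h1, List.range_succ, List.map_append, List.reverse_append]
  simp [h2]

/-- (Ram)  In the Hecke algebra `Hₙ`, for every `2 ≤ j ≤ n` one has
`T(j) - 1 = z · M(j)` with `z = s - s⁻¹`; that is, the Murphy operator `M(j)`
is the linear combination `(T(j) - 1)/(s - s⁻¹)` of the braid `T(j)` and the
identity. -/
theorem heckeT_sub_one (s : Rˣ) (n j : ℕ) (hj : 2 ≤ j) (hjn : j ≤ n) :
    heckeT s n j - 1 = ((s : R) - ((s⁻¹ : Rˣ) : R)) • murphyOp s n j := by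
  induction j, hj using Nat.le_induction with
  | base =>
      have h0 : (0 : ℕ) < n - 1 := by omega
      have hT : heckeT s n 2 = heckeGen s n 0 * heckeGen s n 0 := by
        rw [heckeT,
          show (2:ℕ) = 1 + 1 from rfl,
          ascProd_succ s n 1 1 le_rfl le_rfl,
          descProd_succ s n 1 1 le_rfl le_rfl,
          ascProd_stop s n 1 1 le_rfl, descProd_stop s n 1 1 le_rfl]
        simp
      have hM : murphyOp s n 2 = heckeGen s n 0 := by
        rw [murphyOp]
        rw [show Finset.Ico 1 2 = {1} from rfl, Finset.sum_singleton,
          omegaBraid, ascProd_stop s n 2 2 le_rfl, descProd_stop s n 2 2 le_rfl]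
        simp
      rw [hT, hM, hecke_quad s n 0 h0]
      simp
  | succ j hj2 IH =>
      have hjn' : j ≤ n := by omega
      have hquad := hecke_quad s n (j - 1) (by omega)
      set z : R := (s : R) - ((s⁻¹ : Rˣ) : R) with hz
      set a := heckeGen s n (j - 1) with hadef
      have hT : heckeT s n (j + 1) = a * heckeT s n j * a := by
        rw [heckeT, heckeT, ascProd_succ s n 1 j le_rfl (by omega),
          descProd_succ s n 1 j le_rfl (by omega), ← hadef]
        simp [mul_assoc]
      have hM : murphyOp s n (j + 1) = a * murphyOp s n j * a + a := by
        rw [murphyOp, murphyOp, Finset.sum_Ico_succ_top (by omega : 1 ≤ j)]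
        have hlast : omegaBraid s n j (j + 1) = a := by
          rw [omegaBraid, ascProd_stop s n (j+1) (j+1) le_rfl,
            descProd_stop s n (j+1) (j+1) le_rfl, ← hadef]
          simp
        have hmid : ∀ i ∈ Finset.Ico 1 j,
            omegaBraid s n i (j + 1) = a * omegaBraid s n i j * a := by
          intro i hi
          simp only [Finset.mem_Ico] at hi
          rw [omegaBraid, omegaBraid,
            ascProd_succ s n (i+1) j (by omega) (by omega),
            descProd_succ s n (i+1) j (by omega) (by omega), ← hadef]
          simp [mul_assoc]
        rw [Finset.sum_congr rfl hmid, hlast, Finset.mul_sum, Finset.sum_mul]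
      have hTj : heckeT s n j = z • murphyOp s n j + 1 :=
        sub_eq_iff_eq_add.mp (IH hjn')
      rw [hT, hM, hTj]
      rw [mul_add, add_mul, mul_one, mul_smul_comm, smul_mul_assoc,
        hquad, smul_add]
      abel
end

section
/- In the Hecke algebra Hₙ, the elements T(1), T(2), …, T(n) commute pairwise: T(j)·T(k) = T(k)·T(j) for all 1 ≤ j, k ≤ n. -/
variable {R : Type*} [CommRing R]

section Aux
variable (s : Rˣ) (n : ℕ)

lemma heckeGen_comm {a b : ℕ} (h : a + 2 ≤ b) :
    heckeGen s n a * heckeGen s n b = heckeGen s n b * heckeGen s n a := by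
  by_cases hb : b < n - 1
  · have ha : a < n - 1 := by omega
    unfold heckeGen
    rw [dif_pos ha, dif_pos hb, ← map_mul, ← map_mul]
    exact RingQuot.mkAlgHom_rel R (HeckeRel.comm ⟨a, ha⟩ ⟨b, hb⟩ h)
  · unfold heckeGen; rw [dif_neg hb, one_mul, mul_one]

lemma heckeGen_braid {t : ℕ} (h : t + 1 < n - 1) :
    heckeGen s n t * heckeGen s n (t + 1) * heckeGen s n t
      = heckeGen s n (t + 1) * heckeGen s n t * heckeGen s n (t + 1) := by
  have ht : t < n - 1 := by omega
  unfold heckeGen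
  rw [dif_pos ht, dif_pos h, ← map_mul, ← map_mul, ← map_mul, ← map_mul]
  exact RingQuot.mkAlgHom_rel R (HeckeRel.braid ⟨t, ht⟩ ⟨t + 1, h⟩ rfl)

lemma ascProd_one_succ (j : ℕ) :
    ascProd s n 1 (j + 2) = ascProd s n 1 (j + 1) * heckeGen s n j := by
  unfold ascProd
  simp [List.range_succ]

lemma descProd_one_succ (j : ℕ) :
    descProd s n 1 (j + 2) = heckeGen s n j * descProd s n 1 (j + 1) := by
  unfold descProd
  simp [List.range_succ]

lemma heckeT_succ (j : ℕ) :
    heckeT s n (j + 2) = heckeGen s n j * heckeT s n (j + 1) * heckeGen s n j := by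
  unfold heckeT
  rw [ascProd_one_succ, descProd_one_succ]
  simp [mul_assoc]

lemma heckeGen_commute_heckeT_of_ge {t j : ℕ} (h : j ≤ t) :
    Commute (heckeGen s n t) (heckeT s n j) := by
  unfold heckeT descProd ascProd
  apply Commute.mul_right <;>
  · apply Commute.list_prod_right
    intro y hy
    simp only [List.mem_reverse, List.mem_map, List.mem_range] at hy
    obtain ⟨u, hu, rfl⟩ := hy
    exact (heckeGen_comm s n (show (1 - 1 + u) + 2 ≤ t by omega)).symm

lemma heckeGen_commute_heckeT_of_le :
    ∀ k, k ≤ n → ∀ t, t + 3 ≤ k → Commute (heckeGen s n t) (heckeT s n k) := by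
  intro k
  induction k with
  | zero => intro _ t ht; omega
  | succ m ih =>
    intro hmn t ht
    obtain ⟨p, rfl⟩ : ∃ p, m = p + 1 := ⟨m - 1, by omega⟩
    rw [heckeT_succ]
    rcases Nat.lt_or_ge (t + 2) p with hlt | hge
    · have h1 : Commute (heckeGen s n t) (heckeGen s n p) :=
        heckeGen_comm s n (by omega)
      have h2 : Commute (heckeGen s n t) (heckeT s n (p + 1)) :=
        ih (by omega) t (by omega)
      exact (h1.mul_right h2).mul_right h1
    · -- here t + 3 ≤ p + 2 and p ≤ t + 2, so p = t + 1 or p = t + 2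
      rcases Nat.eq_or_lt_of_le hge with hpe | hlt2
      · -- p = t + 2 : t + 2 ≤ p still uses far commutation
        have h1 : Commute (heckeGen s n t) (heckeGen s n p) :=
          heckeGen_comm s n (by omega)
        have h2 : Commute (heckeGen s n t) (heckeT s n (p + 1)) :=
          ih (by omega) t (by omega)
        exact (h1.mul_right h2).mul_right h1
      · have hp : p = t + 1 := by omega
        subst hp
        -- key braid computation
        set a := heckeGen s n t with ha
        set b := heckeGen s n (t + 1) with hbdef
        have hbr : a * b * a = b * a * b := heckeGen_braid s n (by omega)
        have hX : b * heckeT s n (t + 1) = heckeT s n (t + 1) * b :=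
          heckeGen_commute_heckeT_of_ge s n (le_refl (t + 1))
        rw [heckeT_succ]
        set X := heckeT s n (t + 1) with hXdef
        show a * (b * (a * X * a) * b) = b * (a * X * a) * b * a
        have hbr2 : ∀ y : Hecke R s n, a * (b * (a * y)) = b * (a * (b * y)) := by
          intro y
          rw [← mul_assoc, ← mul_assoc, hbr, mul_assoc, mul_assoc]
        have hbr3 : b * (a * b) = a * (b * a) := by
          rw [← mul_assoc, ← hbr, mul_assoc]
        have hX2 : ∀ y : Hecke R s n, b * (X * y) = X * (b * y) := by
          intro y; rw [← mul_assoc, hX, mul_assoc]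
        simp only [mul_assoc]
        rw [hbr2, hX2, hbr3]

lemma heckeT_commute_of_lt {j k : ℕ} (hkn : k ≤ n) (hjk : j < k) :
    Commute (heckeT s n j) (heckeT s n k) := by
  have key : ∀ y ∈ ((List.range (j - 1)).map (fun t => heckeGen s n (1 - 1 + t))),
      Commute y (heckeT s n k) := by
    intro y hy
    simp only [List.mem_map, List.mem_range] at hy
    obtain ⟨u, hu, rfl⟩ := hy
    exact heckeGen_commute_heckeT_of_le s n k hkn (1 - 1 + u) (by omega)
  have h1 : Commute (descProd s n 1 j) (heckeT s n k) := by
    apply Commute.list_prod_left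
    intro y hy
    exact key y (List.mem_reverse.mp hy)
  have h2 : Commute (ascProd s n 1 j) (heckeT s n k) :=
    Commute.list_prod_left _ _ key
  exact Commute.mul_left h1 h2

end Aux

/-- In the Hecke algebra `Hₙ`, the elements `T(1), …, T(n)` commute pairwise. -/
theorem heckeT_mul_comm (s : Rˣ) (n : ℕ) (hn : 1 ≤ n) (j k : ℕ)
    (hj1 : 1 ≤ j) (hjn : j ≤ n) (hk1 : 1 ≤ k) (hkn : k ≤ n) :
    heckeT s n j * heckeT s n k = heckeT s n k * heckeT s n j := by
  rcases Nat.lt_trichotomy j k with h | rfl | h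
  · exact (heckeT_commute_of_lt s n hkn h).eq
  · rfl
  · exact (heckeT_commute_of_lt s n hjn h).eq.symm
end

section
/- (Dipper–James) For every symmetric polynomial f in n−1 variables over R (i.e. f is invariant under every permutation of its variables), the evaluation f(M(2), …, M(n)) — which is well defined since the Murphy operators commute pairwise — is central in the Hecke algebra Hₙ. -/
variable {R : Type*} [CommRing R]

/-- Evaluation of a multivariate polynomial `f` in `n - 1` variables at the
(pairwise commuting) Murphy operators `M(2), …, M(n)`: the variable indexed by
`i : Fin (n-1)` is sent to `M(i+2)`.  Since the Murphy operators commute,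
taking the products of the powers in the fixed order of `Fin (n-1)` gives the
usual evaluation. -/
noncomputable def evalMurphy (s : Rˣ) (n : ℕ) (f : MvPolynomial (Fin (n - 1)) R) :
    Hecke R s n :=
  ∑ d ∈ f.support, f.coeff d •
    ((List.finRange (n - 1)).map (fun (i : Fin (n - 1)) => murphyOp s n (i.val + 2) ^ d i)).prod

/-!
The Murphy operators satisfy `M(1) = 0` and `M(k+1) = σₖ M(k) σₖ + σₖ`. From this recursion and
the braid relations, `σₖ` commutes with `M(j)` for `j ∉ {k, k+1}`, and the `M(j)` commute with
each other, so `f ↦ f(M(2), …, M(n))` is an algebra map `φ` and it suffices to show that every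
`σₖ` commutes with `φ f`. For `k = 1` this holds for all `f` since `M(2) = σ₁`. For `k ≥ 2` put
`a = M(k)` and `b = M(k+1) = σₖ a σₖ + σₖ`: the quadratic relation makes `σₖ` commute with `a + b`
and `a b`, while a polynomial invariant under swapping two variables lies in the subalgebra
generated by their sum, their product and the other variables (pair each monomial with its swap
and use Newton's identity for the power sums `aᵖ + bᵖ`).
-/

section PowerSums

variable {K S : Type*} [CommRing K] [SetLike S K] [SubringClass S K] {T : S} {x y : K}

theorem pow_add_pow_mem (hadd : x + y ∈ T) (hmul : x * y ∈ T) (q : ℕ) :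
    x ^ q + y ^ q ∈ T := by
  induction q using Nat.strong_induction_on with
  | _ q ih =>
    match q, ih with
    | 0, _ => simpa only [pow_zero] using add_mem (one_mem T) (one_mem T)
    | 1, _ => simpa only [pow_one] using hadd
    | q + 2, ih =>
      have newton : x ^ (q + 2) + y ^ (q + 2)
          = (x + y) * (x ^ (q + 1) + y ^ (q + 1)) - x * y * (x ^ q + y ^ q) := by ring
      rw [newton]
      exact sub_mem (mul_mem hadd (ih _ (by omega))) (mul_mem hmul (ih _ (by omega)))

theorem pow_mul_pow_add_pow_mul_pow_mem (hadd : x + y ∈ T) (hmul : x * y ∈ T) (p q : ℕ) :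
    x ^ p * y ^ q + x ^ q * y ^ p ∈ T := by
  wlog hpq : p ≤ q generalizing p q
  · simpa only [add_comm] using this q p (by omega)
  obtain ⟨r, rfl⟩ := Nat.exists_eq_add_of_le hpq
  have h : x ^ p * y ^ (p + r) + x ^ (p + r) * y ^ p = (x * y) ^ p * (x ^ r + y ^ r) := by ring
  exact h ▸ mul_mem (pow_mem hmul p) (pow_add_pow_mem hadd hmul r)

end PowerSums

section SwapInvariant

open MvPolynomial

variable {ι : Type*} {u v : ι}

theorem Finsupp.mapDomain_swap_apply {M : Type*} [AddCommMonoid M] [DecidableEq ι] (d : ι →₀ M)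
    (i : ι) : d.mapDomain (Equiv.swap u v) i = d (Equiv.swap u v i) := by
  rw [← Finsupp.equivMapDomain_eq_mapDomain, Finsupp.equivMapDomain_apply, Equiv.symm_swap]

theorem Finsupp.erase_erase_mapDomain_swap {M : Type*} [AddCommMonoid M] [DecidableEq ι]
    (d : ι →₀ M) : ((d.mapDomain (Equiv.swap u v)).erase u).erase v = (d.erase u).erase v := by
  ext i
  by_cases hv : i = v
  · simp [hv]
  by_cases hu : i = u
  · subst hu
    rw [Finsupp.erase_ne hv, Finsupp.erase_ne hv, Finsupp.erase_same, Finsupp.erase_same]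
  rw [Finsupp.erase_ne hv, Finsupp.erase_ne hu, Finsupp.erase_ne hv, Finsupp.erase_ne hu,
    mapDomain_swap_apply, Equiv.swap_apply_of_ne_of_ne hu hv]

theorem MvPolynomial.monomial_eq_X_pow_mul_X_pow_mul (huv : u ≠ v) (d : ι →₀ ℕ) :
    monomial d (1 : R) = X u ^ d u * X v ^ d v * monomial ((d.erase u).erase v) 1 := by
  conv_lhs => rw [← Finsupp.single_add_erase u d, ← Finsupp.single_add_erase v (d.erase u),
    Finsupp.erase_ne huv.symm]
  rw [X_pow_eq_monomial, X_pow_eq_monomial, monomial_mul, monomial_mul, add_assoc, one_mul,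
    one_mul]

theorem MvPolynomial.monomial_erase_erase_mem [DecidableEq ι]
    {S : Subalgebra R (MvPolynomial ι R)} (hX : ∀ i, i ≠ u → i ≠ v → X i ∈ S) (d : ι →₀ ℕ) :
    monomial ((d.erase u).erase v) (1 : R) ∈ S := by
  rw [monomial_eq, C_1, one_mul]
  refine Subalgebra.prod_mem S fun i hi => pow_mem ?_ _
  simp only [Finsupp.support_erase, Finset.mem_erase] at hi
  exact hX i hi.2.1 hi.1

variable [DecidableEq ι] {S : Subalgebra R (MvPolynomial ι R)}
  (huv : u ≠ v) (hX : ∀ i, i ≠ u → i ≠ v → X i ∈ S)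
include huv hX

theorem MvPolynomial.monomial_add_monomial_mapDomain_swap_mem (hadd : X u + X v ∈ S)
    (hmul : X u * X v ∈ S) (d : ι →₀ ℕ) :
    monomial d (1 : R) + monomial (d.mapDomain (Equiv.swap u v)) 1 ∈ S := by
  rw [monomial_eq_X_pow_mul_X_pow_mul huv, monomial_eq_X_pow_mul_X_pow_mul huv (d.mapDomain _),
    Finsupp.erase_erase_mapDomain_swap, Finsupp.mapDomain_swap_apply,
    Finsupp.mapDomain_swap_apply, Equiv.swap_apply_left, Equiv.swap_apply_right, ← add_mul]
  exact mul_mem (pow_mul_pow_add_pow_mul_pow_mem hadd hmul _ _) (monomial_erase_erase_mem hX d)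

theorem MvPolynomial.monomial_mem_of_mapDomain_swap_eq (hmul : X u * X v ∈ S) {d : ι →₀ ℕ}
    (hd : d.mapDomain (Equiv.swap u v) = d) : monomial d (1 : R) ∈ S := by
  have hduv : d v = d u := by
    simpa only [Finsupp.mapDomain_swap_apply, Equiv.swap_apply_left] using
      DFunLike.congr_fun hd u
  rw [monomial_eq_X_pow_mul_X_pow_mul huv, hduv, ← mul_pow]
  exact mul_mem (pow_mem hmul _) (monomial_erase_erase_mem hX d)

/-- The swap pairs off the monomials of `f`; the pairing is done in the quotient module by `S`,
so that no division by `2` is needed. -/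
theorem MvPolynomial.mem_of_rename_swap_eq (hadd : X u + X v ∈ S) (hmul : X u * X v ∈ S)
    {f : MvPolynomial ι R} (hf : rename (Equiv.swap u v) f = f) : f ∈ S := by
  set τ := Equiv.swap u v
  have hcoeff (d : ι →₀ ℕ) : coeff (d.mapDomain τ) f = coeff d f := by
    conv_lhs => rw [← hf]
    exact coeff_rename_mapDomain τ τ.injective f d
  have hinvol (d : ι →₀ ℕ) : (d.mapDomain τ).mapDomain τ = d := by
    ext i
    rw [Finsupp.mapDomain_swap_apply, Finsupp.mapDomain_swap_apply, Equiv.swap_apply_self]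
  have hsmul (d : ι →₀ ℕ) (c : R) : monomial d c = c • monomial d 1 := by
    rw [smul_monomial, smul_eq_mul, mul_one]
  rw [← Subalgebra.mem_toSubmodule, ← Submodule.Quotient.mk_eq_zero,
    ← support_sum_monomial_coeff f, ← Submodule.mkQ_apply, map_sum]
  refine Finset.sum_involution (fun d _ => d.mapDomain τ) (fun d _ => ?_) (fun d _ hne => ?_)
    (fun d hd => ?_) (fun d _ => hinvol d)
  · rw [hcoeff, ← map_add, Submodule.mkQ_apply, Submodule.Quotient.mk_eq_zero,
      hsmul, hsmul (d.mapDomain τ), ← smul_add]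
    exact Submodule.smul_mem _ _ (monomial_add_monomial_mapDomain_swap_mem huv hX hadd hmul d)
  · refine fun hd => hne ?_
    rw [Submodule.mkQ_apply, Submodule.Quotient.mk_eq_zero, hsmul]
    exact Submodule.smul_mem _ _ (monomial_mem_of_mapDomain_swap_eq huv hX hmul hd)
  · rwa [mem_support_iff, hcoeff, ← mem_support_iff]

end SwapInvariant

section QuadraticRelation

variable {A : Type*} [Ring A] [Algebra R A] {z : R} {σ τ a b : A}

theorem mul_mul_of_quadratic (hσ : σ * σ = z • σ + 1) (w : A) :
    σ * (σ * w) = z • (σ * w) + w := by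
  rw [← mul_assoc, hσ, add_mul, smul_mul_assoc, one_mul]

theorem commute_add_of_quadratic (hσ : σ * σ = z • σ + 1) (hb : b = σ * a * σ + σ) :
    Commute σ (a + b) := by
  subst hb
  simp only [Commute, SemiconjBy, mul_add, add_mul, mul_assoc, mul_mul_of_quadratic hσ, hσ,
    mul_smul_comm, mul_one]
  abel

theorem commute_mul_of_quadratic (hσ : σ * σ = z • σ + 1) (hab : Commute a b)
    (hb : b = σ * a * σ + σ) : Commute σ (a * b) := by
  have hσb : σ * b = z • b + a * σ + 1 := by
    rw [hb]
    simp only [mul_add, mul_assoc, mul_mul_of_quadratic hσ, hσ, smul_add]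
    abel
  have hbσ : b * σ = z • b + σ * a + 1 := by
    rw [hb]
    simp only [add_mul, mul_assoc, hσ, mul_add, mul_smul_comm, mul_one, smul_add]
    abel
  calc σ * (a * b) = σ * b * a := by rw [hab.eq, mul_assoc]
    _ = a * (b * σ) := by
        rw [hσb, hbσ]
        simp only [add_mul, mul_add, smul_mul_assoc, mul_smul_comm, one_mul, mul_one, mul_assoc,
          hab.eq]
    _ = a * b * σ := (mul_assoc _ _ _).symm

theorem commute_conj_conj_of_braid (hbraid : σ * τ * σ = τ * σ * τ) (hτ : τ * τ = z • τ + 1)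
    (hτa : Commute τ a) : Commute σ (τ * (σ * a * σ + σ) * τ + τ) := by
  have hconj : Commute σ (τ * σ * a * σ * τ) := calc
    σ * (τ * σ * a * σ * τ) = τ * σ * (τ * a) * σ * τ := by
      simp only [← mul_assoc, hbraid]
    _ = τ * σ * a * (σ * τ * σ) := by
      rw [hτa.eq, hbraid]; simp only [mul_assoc]
    _ = τ * σ * a * σ * τ * σ := by simp only [mul_assoc]
  have hlinear : Commute σ (τ * σ * τ + τ) := calc
    σ * (τ * σ * τ + τ) = τ * σ * (τ * τ) + σ * τ := by
      rw [mul_add, ← mul_assoc, ← mul_assoc, hbraid, mul_assoc _ τ τ]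
    _ = τ * τ * σ * τ + τ * σ := by
      rw [hτ]; simp only [mul_add, add_mul, mul_smul_comm, smul_mul_assoc, mul_one, one_mul]; abel
    _ = (τ * σ * τ + τ) * σ := by
      conv_lhs => rw [mul_assoc τ τ σ, mul_assoc τ (τ * σ) τ, ← hbraid]
      simp only [add_mul, mul_assoc]
  have hsplit : τ * (σ * a * σ + σ) * τ + τ = τ * σ * a * σ * τ + (τ * σ * τ + τ) := by
    simp only [mul_add, add_mul, mul_assoc, add_assoc]
  exact hsplit ▸ hconj.add_right hlinear

end QuadraticRelation

section Centralizer

open MvPolynomial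

variable {ι A : Type*} [Ring A] [Algebra R A]

theorem AlgHom.mem_comap_centralizer_singleton_iff {B : Type*} [Semiring B] [Algebra R B]
    (φ : B →ₐ[R] A) {σ : A} {b : B} :
    b ∈ (Subalgebra.centralizer R {σ}).comap φ ↔ Commute σ (φ b) := by
  simp [Subalgebra.mem_centralizer_iff, Commute, SemiconjBy]

theorem MvPolynomial.commute_of_commute_X (φ : MvPolynomial ι R →ₐ[R] A) {σ : A}
    (h : ∀ i, Commute σ (φ (X i))) (f : MvPolynomial ι R) : Commute σ (φ f) := by
  have htop : (Subalgebra.centralizer R {σ}).comap φ = ⊤ := by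
    rw [eq_top_iff, ← adjoin_range_X, Algebra.adjoin_le_iff]
    rintro _ ⟨i, rfl⟩
    exact φ.mem_comap_centralizer_singleton_iff.2 (h i)
  exact φ.mem_comap_centralizer_singleton_iff.1 (htop ▸ Algebra.mem_top)

theorem MvPolynomial.commute_of_rename_swap_eq [DecidableEq ι] (φ : MvPolynomial ι R →ₐ[R] A)
    {σ : A} {z : R} (hσ : σ * σ = z • σ + 1) {u v : ι} (huv : u ≠ v)
    (hv : φ (X v) = σ * φ (X u) * σ + σ) (hrest : ∀ i, i ≠ u → i ≠ v → Commute σ (φ (X i)))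
    {f : MvPolynomial ι R} (hf : rename (Equiv.swap u v) f = f) : Commute σ (φ f) := by
  have hab : Commute (φ (X u)) (φ (X v)) := (Commute.all _ _).map φ
  refine φ.mem_comap_centralizer_singleton_iff.1 (mem_of_rename_swap_eq huv
    (fun i hiu hiv => φ.mem_comap_centralizer_singleton_iff.2 (hrest i hiu hiv)) ?_ ?_ hf)
  · rw [φ.mem_comap_centralizer_singleton_iff, map_add]
    exact commute_add_of_quadratic hσ hv
  · rw [φ.mem_comap_centralizer_singleton_iff, map_mul]
    exact commute_mul_of_quadratic hσ hab hv

end Centralizer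

namespace Hecke

variable {s : Rˣ} {n : ℕ}

theorem heckeGen_mul_self {k : ℕ} (hk : k < n - 1) :
    heckeGen s n k * heckeGen s n k = ((s : R) - ((s⁻¹ : Rˣ) : R)) • heckeGen s n k + 1 := by
  rw [heckeGen, dif_pos hk, ← map_mul,
    RingQuot.mkAlgHom_rel R (HeckeRel.quad (s := s) ⟨k, hk⟩), map_add, map_smul, map_one]

theorem heckeGen_commute {i j : ℕ} (h : i + 2 ≤ j) :
    Commute (heckeGen s n i) (heckeGen s n j) := by
  by_cases hj : j < n - 1
  · have hi : i < n - 1 := by omega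
    rw [heckeGen, heckeGen, dif_pos hi, dif_pos hj, Commute, SemiconjBy, ← map_mul, ← map_mul,
      RingQuot.mkAlgHom_rel R (HeckeRel.comm (s := s) ⟨i, hi⟩ ⟨j, hj⟩ h)]
  · rw [show heckeGen s n j = 1 from dif_neg hj]
    exact Commute.one_right _

theorem heckeGen_braid {k : ℕ} (hk : k + 1 < n - 1) :
    heckeGen s n k * heckeGen s n (k + 1) * heckeGen s n k
      = heckeGen s n (k + 1) * heckeGen s n k * heckeGen s n (k + 1) := by
  have hk' : k < n - 1 := by omega
  simp only [heckeGen, dif_pos hk, dif_pos hk', ← map_mul]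
  rw [RingQuot.mkAlgHom_rel R (HeckeRel.braid (s := s) ⟨k, hk'⟩ ⟨k + 1, hk⟩ rfl)]

theorem descProd_self (i : ℕ) : descProd s n i i = 1 := by
  simp [descProd]

theorem ascProd_self (i : ℕ) : ascProd s n i i = 1 := by
  simp [ascProd]

theorem descProd_succ {i j : ℕ} (hi : 1 ≤ i) (hij : i ≤ j) :
    descProd s n i (j + 1) = heckeGen s n (j - 1) * descProd s n i j := by
  rw [descProd, descProd, show j + 1 - i = j - i + 1 by omega, List.range_succ]
  simp [show i - 1 + (j - i) = j - 1 by omega]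

theorem ascProd_succ {i j : ℕ} (hi : 1 ≤ i) (hij : i ≤ j) :
    ascProd s n i (j + 1) = ascProd s n i j * heckeGen s n (j - 1) := by
  rw [ascProd, ascProd, show j + 1 - i = j - i + 1 by omega, List.range_succ]
  simp [show i - 1 + (j - i) = j - 1 by omega]

theorem omegaBraid_self_succ (i : ℕ) : omegaBraid s n i (i + 1) = heckeGen s n (i - 1) := by
  rw [omegaBraid, descProd_self, ascProd_self, one_mul, mul_one]

theorem omegaBraid_succ {i k : ℕ} (hi : 1 ≤ i) (hik : i ≤ k) :
    omegaBraid s n i (k + 2) = heckeGen s n k * omegaBraid s n i (k + 1) * heckeGen s n k := by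
  rw [omegaBraid, omegaBraid, descProd_succ (by omega) (by omega),
    ascProd_succ (by omega) (by omega), Nat.add_sub_cancel]
  simp only [mul_assoc]

theorem murphyOp_eq_zero {j : ℕ} (hj : j ≤ 1) : murphyOp s n j = 0 := by
  rw [murphyOp, Finset.Ico_eq_empty_of_le hj, Finset.sum_empty]

theorem murphyOp_succ_succ (k : ℕ) :
    murphyOp s n (k + 2)
      = heckeGen s n k * murphyOp s n (k + 1) * heckeGen s n k + heckeGen s n k := by
  rw [murphyOp, Finset.sum_Ico_succ_top (by omega), omegaBraid_self_succ, Nat.add_sub_cancel,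
    murphyOp, Finset.mul_sum, Finset.sum_mul]
  congr 1
  refine Finset.sum_congr rfl fun i hi => ?_
  rw [Finset.mem_Ico] at hi
  exact omegaBraid_succ hi.1 (by omega)

theorem murphyOp_two : murphyOp s n 2 = heckeGen s n 0 := by
  rw [murphyOp_succ_succ, murphyOp_eq_zero le_rfl, mul_zero, zero_mul, zero_add]

theorem commute_heckeGen_murphyOp_of_le {k j : ℕ} (h : j ≤ k) :
    Commute (heckeGen s n k) (murphyOp s n j) := by
  induction j with
  | zero => rw [murphyOp_eq_zero (by omega)]; exact Commute.zero_right _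
  | succ j ih =>
    rcases j with _ | j
    · rw [murphyOp_eq_zero le_rfl]; exact Commute.zero_right _
    · have hg : Commute (heckeGen s n k) (heckeGen s n j) := (heckeGen_commute (by omega)).symm
      rw [murphyOp_succ_succ]
      exact ((hg.mul_right (ih (by omega))).mul_right hg).add_right hg

theorem commute_heckeGen_murphyOp_add_three {k : ℕ} (hk : k + 1 < n - 1) :
    Commute (heckeGen s n k) (murphyOp s n (k + 3)) := by
  rw [murphyOp_succ_succ, murphyOp_succ_succ]
  exact commute_conj_conj_of_braid (heckeGen_braid hk) (heckeGen_mul_self hk)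
    (commute_heckeGen_murphyOp_of_le le_rfl)

theorem commute_heckeGen_murphyOp_of_add_three_le {k j : ℕ} (hk : k + 1 < n - 1)
    (h : k + 3 ≤ j) : Commute (heckeGen s n k) (murphyOp s n j) := by
  induction j, h using Nat.le_induction with
  | base => exact commute_heckeGen_murphyOp_add_three hk
  | succ j hj ih =>
    obtain ⟨m, rfl⟩ : ∃ m, j = m + 1 := ⟨j - 1, by omega⟩
    have hg : Commute (heckeGen s n k) (heckeGen s n m) := heckeGen_commute (by omega)
    rw [murphyOp_succ_succ]
    exact ((hg.mul_right ih).mul_right hg).add_right hg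

theorem murphyOp_commute {j l : ℕ} (hjl : j < l) (hl : l ≤ n) :
    Commute (murphyOp s n j) (murphyOp s n l) := by
  induction j with
  | zero => rw [murphyOp_eq_zero (by omega)]; exact Commute.zero_left _
  | succ j ih =>
    rcases j with _ | j
    · rw [murphyOp_eq_zero le_rfl]; exact Commute.zero_left _
    · have hg : Commute (heckeGen s n j) (murphyOp s n l) :=
        commute_heckeGen_murphyOp_of_add_three_le (by omega) (by omega)
      rw [murphyOp_succ_succ]
      exact ((hg.mul_left (ih (by omega))).mul_left hg).add_left hg

open MvPolynomial
open scoped IsMulCommutative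

variable (s n)

noncomputable def murphySubalgebra : Subalgebra R (Hecke R s n) :=
  Algebra.adjoin R (Set.range fun i : Fin (n - 1) => murphyOp s n (i + 2))

instance : IsMulCommutative (murphySubalgebra s n) :=
  Algebra.isMulCommutative_adjoin R <| by
    rintro _ ⟨i, rfl⟩ _ ⟨j, rfl⟩
    rcases lt_trichotomy (i : ℕ) j with h | h | h
    · exact (murphyOp_commute (by omega) (by omega)).eq
    · simp only [h]
    · exact (murphyOp_commute (by omega) (by omega)).symm.eq

noncomputable def murphyHom : MvPolynomial (Fin (n - 1)) R →ₐ[R] Hecke R s n :=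
  (murphySubalgebra s n).val.comp
    (aeval fun i => ⟨murphyOp s n (i + 2), Algebra.subset_adjoin ⟨i, rfl⟩⟩)

variable {s n}

theorem murphyHom_X (i : Fin (n - 1)) : murphyHom s n (X i) = murphyOp s n (i + 2) := by
  simp [murphyHom]

theorem evalMurphy_eq_murphyHom (f : MvPolynomial (Fin (n - 1)) R) :
    evalMurphy s n f = murphyHom s n f := by
  rw [murphyHom, AlgHom.comp_apply, aeval_def, eval₂_eq', map_sum]
  refine Finset.sum_congr rfl fun d _ => ?_
  rw [map_mul, Fin.prod_univ_def, map_list_prod, List.map_map, AlgHom.commutes,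
    ← Algebra.smul_def]
  rfl

theorem commute_heckeGen_zero_murphyHom (f : MvPolynomial (Fin (n - 1)) R) :
    Commute (heckeGen s n 0) (murphyHom s n f) := by
  refine commute_of_commute_X _ (fun i => ?_) f
  rw [murphyHom_X]
  rcases Nat.eq_zero_or_pos (i : ℕ) with hi | hi
  · rw [hi, murphyOp_two]
    exact Commute.refl _
  · exact commute_heckeGen_murphyOp_of_add_three_le (by omega) (by omega)

theorem commute_heckeGen_murphyHom {k : ℕ} (hk : k < n - 1) {f : MvPolynomial (Fin (n - 1)) R}
    (hf : f.IsSymmetric) : Commute (heckeGen s n k) (murphyHom s n f) := by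
  rcases k with _ | k
  · exact commute_heckeGen_zero_murphyHom f
  set u : Fin (n - 1) := ⟨k, by omega⟩
  set v : Fin (n - 1) := ⟨k + 1, hk⟩
  refine commute_of_rename_swap_eq _ (heckeGen_mul_self hk) (u := u) (v := v)
    (by simp [u, v]) ?_ (fun i hiu hiv => ?_) (hf _)
  · rw [murphyHom_X, murphyHom_X, murphyOp_succ_succ]
  · rw [murphyHom_X]
    have hiu : (i : ℕ) ≠ k := fun h => hiu (Fin.ext h)
    have hiv : (i : ℕ) ≠ k + 1 := fun h => hiv (Fin.ext h)
    rcases lt_or_gt_of_ne hiu with h | h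
    · exact commute_heckeGen_murphyOp_of_le (by omega)
    · exact commute_heckeGen_murphyOp_of_add_three_le (by omega) (by omega)

theorem commute_of_forall_commute_heckeGen {a : Hecke R s n}
    (h : ∀ k < n - 1, Commute (heckeGen s n k) a) (x : Hecke R s n) : Commute x a := by
  obtain ⟨y, rfl⟩ := RingQuot.mkAlgHom_surjective R (HeckeRel R s n) x
  induction y using FreeAlgebra.induction with
  | grade0 r => rw [AlgHom.commutes]; exact Algebra.commutes' r a
  | grade1 i => simpa only [heckeGen, dif_pos i.isLt] using h i i.isLt
  | mul p q hp hq => rw [map_mul]; exact hp.mul_left hq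
  | add p q hp hq => rw [map_add]; exact hp.add_left hq

end Hecke

theorem evalMurphy_central_general (s : Rˣ) (n : ℕ)
    (f : MvPolynomial (Fin (n - 1)) R) (hf : f.IsSymmetric) (x : Hecke R s n) :
    evalMurphy s n f * x = x * evalMurphy s n f := by
  rw [Hecke.evalMurphy_eq_murphyHom]
  exact (Hecke.commute_of_forall_commute_heckeGen
    (fun _ hk => Hecke.commute_heckeGen_murphyHom hk hf) x).symm

/-- (Dipper–James)  For every symmetric polynomial `f` in `n - 1` variables
over `R`, the evaluation `f(M(2), …, M(n))` at the Murphy operators is central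
in the Hecke algebra `Hₙ`: it commutes with every element of `Hₙ`. -/
theorem evalMurphy_central (s : Rˣ) (n : ℕ) (hn : 1 ≤ n)
    (f : MvPolynomial (Fin (n - 1)) R) (hf : f.IsSymmetric) (x : Hecke R s n) :
    evalMurphy s n f * x = x * evalMurphy s n f :=
  evalMurphy_central_general s n f hf x
end

section
/- In the Hecke algebra Hₙ, the product T(2)·T(3)⋯T(n) (the full twist) is central: it commutes with every element of Hₙ. -/
variable {R : Type*} [CommRing R]

namespace FTaux

/-- helper for rewriting with a left context -/
lemma ctx2 {M : Type*} [Monoid M] {a b c d : M} (h : a * b = c * d) (x : M) :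
    x * a * b = x * c * d := by
  rw [mul_assoc, h, mul_assoc]

lemma ctx3 {M : Type*} [Monoid M] {a b c d e f : M} (h : a * b * c = d * e * f) (x : M) :
    x * a * b * c = x * d * e * f := by
  have h' := h
  simp only [mul_assoc] at h'
  simp only [mul_assoc]
  rw [h']

variable (s : Rˣ) (n : ℕ)

lemma gen_braid {i : ℕ} (h : i + 2 ≤ n - 1) :
    heckeGen s n i * heckeGen s n (i+1) * heckeGen s n i
      = heckeGen s n (i+1) * heckeGen s n i * heckeGen s n (i+1) := by
  have hi : i < n - 1 := by omega
  have hi1 : i + 1 < n - 1 := by omega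
  simp only [heckeGen, dif_pos hi, dif_pos hi1]
  simpa only [map_mul] using
    RingQuot.mkAlgHom_rel R (HeckeRel.braid (R := R) (s := s) (n := n) (⟨i, hi⟩ : Fin (n-1)) ⟨i+1, hi1⟩ rfl)

lemma gen_comm {i j : ℕ} (h : i + 2 ≤ j) :
    Commute (heckeGen s n i) (heckeGen s n j) := by
  by_cases hj : j < n - 1
  · have hi : i < n - 1 := by omega
    simp only [heckeGen, dif_pos hi, dif_pos hj]
    have := RingQuot.mkAlgHom_rel R (HeckeRel.comm (R := R) (s := s) (n := n) (⟨i, hi⟩ : Fin (n-1)) ⟨j, hj⟩ h)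
    simp only [map_mul] at this
    exact this
  · simp only [heckeGen, dif_neg hj]
    exact Commute.one_right _


noncomputable def uRun (a m : ℕ) : Hecke R s n :=
  ((List.range m).map (fun t => heckeGen s n (a + t))).prod

noncomputable def dRun (a m : ℕ) : Hecke R s n :=
  (((List.range m).map (fun t => heckeGen s n (a + t))).reverse).prod

lemma uRun_zero (a : ℕ) : uRun s n a 0 = 1 := rfl
lemma dRun_zero (a : ℕ) : dRun s n a 0 = 1 := rfl

lemma uRun_succ (a m : ℕ) : uRun s n a (m+1) = uRun s n a m * heckeGen s n (a+m) := by
  simp [uRun, List.range_succ]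

lemma dRun_succ (a m : ℕ) : dRun s n a (m+1) = heckeGen s n (a+m) * dRun s n a m := by
  simp [dRun, List.range_succ]

lemma uRun0_succ (m : ℕ) : uRun s n 0 (m+1) = uRun s n 0 m * heckeGen s n m := by
  simpa using uRun_succ s n 0 m

lemma dRun0_succ (m : ℕ) : dRun s n 0 (m+1) = heckeGen s n m * dRun s n 0 m := by
  simpa using dRun_succ s n 0 m

lemma uRun1_succ (m : ℕ) : uRun s n 1 (m+1) = uRun s n 1 m * heckeGen s n (m+1) := by
  rw [uRun_succ, Nat.add_comm 1 m]

lemma dRun1_succ (m : ℕ) : dRun s n 1 (m+1) = heckeGen s n (m+1) * dRun s n 1 m := by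
  rw [dRun_succ, Nat.add_comm 1 m]

lemma uRun_add (a p q : ℕ) : uRun s n a (p+q) = uRun s n a p * uRun s n (a+p) q := by
  simp [uRun, List.range_add, Function.comp_def, ← Nat.add_assoc]

lemma dRun_add (a p q : ℕ) : dRun s n a (p+q) = dRun s n (a+p) q * dRun s n a p := by
  simp [dRun, List.range_add, Function.comp_def, ← Nat.add_assoc]

lemma gen_commute_mem {k a m : ℕ} (h : k + 2 ≤ a ∨ a + m + 1 ≤ k) :
    ∀ x ∈ (List.range m).map (fun t => heckeGen s n (a + t)), Commute (heckeGen s n k) x := by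
  intro x hx
  obtain ⟨t, ht, rfl⟩ := List.mem_map.1 hx
  rw [List.mem_range] at ht
  rcases h with h | h
  · exact gen_comm s n (by omega)
  · exact (gen_comm s n (i := a + t) (j := k) (by omega)).symm

lemma commute_uRun {k a m : ℕ} (h : k + 2 ≤ a ∨ a + m + 1 ≤ k) :
    Commute (heckeGen s n k) (uRun s n a m) :=
  Commute.list_prod_right _ _ (gen_commute_mem s n h)

lemma commute_dRun {k a m : ℕ} (h : k + 2 ≤ a ∨ a + m + 1 ≤ k) :
    Commute (heckeGen s n k) (dRun s n a m) :=
  Commute.list_prod_right _ _ (fun x hx => gen_commute_mem s n h x (List.mem_reverse.1 hx))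

lemma uRun_two (j : ℕ) : uRun s n j 2 = heckeGen s n j * heckeGen s n (j+1) := by
  rw [show (2:ℕ) = 1 + 1 from rfl, uRun_succ, uRun_succ, uRun_zero, one_mul, Nat.add_zero,
    Nat.add_comm j 1, Nat.add_comm 1 j]

lemma dRun_two (j : ℕ) : dRun s n j 2 = heckeGen s n (j+1) * heckeGen s n j := by
  rw [show (2:ℕ) = 1 + 1 from rfl, dRun_succ, dRun_succ]
  simp [dRun_zero]


lemma slide_u {j M : ℕ} (hj : j + 2 ≤ M) (hM : M ≤ n - 1) :
    heckeGen s n (j+1) * uRun s n 0 M = uRun s n 0 M * heckeGen s n j := by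
  obtain ⟨r, rfl⟩ : ∃ r, M = j + 2 + r := ⟨M - (j+2), by omega⟩
  have hb : j + 2 ≤ n - 1 := by omega
  have e : uRun s n 0 (j+2+r)
      = uRun s n 0 j * heckeGen s n j * heckeGen s n (j+1) * uRun s n (j+2) r := by
    rw [uRun_add s n 0 (j+2) r, uRun_add s n 0 j 2, uRun_two]
    simp [mul_assoc]
  have c1 : Commute (heckeGen s n (j+1)) (uRun s n 0 j) :=
    commute_uRun s n (Or.inr (by omega))
  have c2 : Commute (heckeGen s n j) (uRun s n (j+2) r) :=
    commute_uRun s n (Or.inl (by omega))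
  rw [e]
  simp only [← mul_assoc]
  rw [c1.eq, ← ctx3 (gen_braid s n hb), ctx2 c2.eq]

lemma slide_d {j M : ℕ} (hj : j + 2 ≤ M) (hM : M ≤ n - 1) :
    heckeGen s n j * dRun s n 0 M = dRun s n 0 M * heckeGen s n (j+1) := by
  obtain ⟨r, rfl⟩ : ∃ r, M = j + 2 + r := ⟨M - (j+2), by omega⟩
  have hb : j + 2 ≤ n - 1 := by omega
  have e : dRun s n 0 (j+2+r)
      = dRun s n (j+2) r * heckeGen s n (j+1) * heckeGen s n j * dRun s n 0 j := by
    rw [dRun_add s n 0 (j+2) r, dRun_add s n 0 j 2, dRun_two]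
    simp [mul_assoc]
  have c1 : Commute (heckeGen s n j) (dRun s n (j+2) r) :=
    commute_dRun s n (Or.inl (by omega))
  have c2 : Commute (heckeGen s n (j+1)) (dRun s n 0 j) :=
    commute_dRun s n (Or.inr (by omega))
  rw [e]
  simp only [← mul_assoc]
  rw [c1.eq, ctx3 (gen_braid s n hb), ctx2 c2.eq]

lemma shift_d {a m M : ℕ} (h : a + m + 1 ≤ M) (hM : M ≤ n - 1) :
    uRun s n 0 M * dRun s n a m = dRun s n (a+1) m * uRun s n 0 M := by
  induction m with
  | zero => simp [dRun_zero]
  | succ m ih =>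
    have h' : a + m + 1 ≤ M := by omega
    rw [dRun_succ s n a m, dRun_succ s n (a+1) m, Nat.add_right_comm a 1 m]
    simp only [← mul_assoc]
    rw [← slide_u s n (j := a+m) (by omega) hM, mul_assoc, ih h', ← mul_assoc]

lemma shift_u {a m M : ℕ} (h : a + m + 1 ≤ M) (hM : M ≤ n - 1) :
    uRun s n 0 M * uRun s n a m = uRun s n (a+1) m * uRun s n 0 M := by
  induction m with
  | zero => simp [uRun_zero]
  | succ m ih =>
    have h' : a + m + 1 ≤ M := by omega
    rw [uRun_succ s n a m, uRun_succ s n (a+1) m, Nat.add_right_comm a 1 m]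
    simp only [← mul_assoc]
    rw [ih h', ctx2 (slide_u s n (j := a+m) (by omega) hM).symm]


noncomputable def Vel (m : ℕ) : Hecke R s n :=
  dRun s n 0 m * dRun s n 1 m * uRun s n 1 m * uRun s n 0 m

lemma Vel_rec (m : ℕ) :
    Vel s n (m+1) = heckeGen s n m * heckeGen s n (m+1) * Vel s n m
      * heckeGen s n (m+1) * heckeGen s n m := by
  have c1 : Commute (heckeGen s n (m+1)) (dRun s n 0 m) :=
    commute_dRun s n (Or.inr (by omega))
  have c2 : Commute (heckeGen s n (m+1)) (uRun s n 0 m) :=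
    commute_uRun s n (Or.inr (by omega))
  rw [Vel, dRun0_succ, dRun1_succ, uRun1_succ, uRun0_succ, Vel]
  simp only [← mul_assoc]
  rw [ctx2 c1.eq.symm, ctx2 c2.eq]

lemma commute_gen_Vel {m : ℕ} (hm : m + 1 ≤ n - 1) :
    Commute (heckeGen s n m) (Vel s n m) := by
  induction m with
  | zero =>
    simp only [Vel, dRun_zero, uRun_zero, mul_one]
    exact Commute.one_right _
  | succ m ih =>
    have hb : m + 2 ≤ n - 1 := by omega
    have ihe := (ih (by omega)).eq
    show heckeGen s n (m+1) * Vel s n (m+1) = Vel s n (m+1) * heckeGen s n (m+1)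
    rw [Vel_rec]
    simp only [← mul_assoc]
    rw [← gen_braid s n hb, ctx2 ihe, ctx3 (gen_braid s n hb)]

lemma heckeT_eq (m : ℕ) : heckeT s n (m+1) = dRun s n 0 m * uRun s n 0 m := rfl

lemma heckeT_one : heckeT s n 1 = 1 := by
  have h := heckeT_eq s n 0
  rw [dRun_zero, uRun_zero, one_mul] at h
  exact h

lemma TT_eq (m : ℕ) (hm : m + 1 ≤ n - 1) :
    heckeT s n (m+1) * heckeT s n (m+2)
      = Vel s n m * heckeGen s n m * heckeGen s n m := by
  have sd := shift_d s n (a := 0) (m := m) (M := m+1) (by omega) hm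
  have su := shift_u s n (a := 0) (m := m) (M := m+1) (by omega) hm
  simp only [Nat.zero_add] at sd su
  have hfold : ∀ x : Hecke R s n,
      x * uRun s n 0 m * heckeGen s n m = x * uRun s n 0 (m+1) := fun x => by
    rw [uRun0_succ s n m, mul_assoc]
  rw [show m + 2 = (m+1)+1 from rfl, heckeT_eq s n m, heckeT_eq s n (m+1),
    dRun0_succ, uRun0_succ s n m, Vel]
  simp only [← mul_assoc]
  rw [hfold (dRun s n 0 m), ctx2 sd, ctx2 su, uRun0_succ s n m]
  simp only [← mul_assoc]

lemma comm_TT {m : ℕ} (hm : m + 1 ≤ n - 1) :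
    Commute (heckeGen s n m) (heckeT s n (m+1) * heckeT s n (m+2)) := by
  have hR := (commute_gen_Vel s n hm).eq
  show _ * _ = _ * _
  rw [TT_eq s n m hm]
  simp only [← mul_assoc]
  rw [hR]

lemma comm_T_far {i m : ℕ} (h : m + 1 ≤ i) :
    Commute (heckeGen s n i) (heckeT s n (m+1)) := by
  rw [heckeT_eq]
  exact (commute_dRun s n (Or.inr (by omega))).mul_right
    (commute_uRun s n (Or.inr (by omega)))

lemma comm_T_slide {i M : ℕ} (h1 : i + 2 ≤ M) (hM : M ≤ n - 1) :
    Commute (heckeGen s n i) (heckeT s n (M+1)) := by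
  rw [heckeT_eq]
  show _ * _ = _ * _
  rw [← mul_assoc, slide_d s n h1 hM, mul_assoc, slide_u s n h1 hM, ← mul_assoc]

noncomputable def Fp (j : ℕ) : Hecke R s n :=
  ((List.range j).map (fun k => heckeT s n (k + 2))).prod

lemma Fp_zero : Fp s n 0 = 1 := rfl

lemma Fp_succ (j : ℕ) : Fp s n (j+1) = Fp s n j * heckeT s n (j+2) := by
  simp [Fp, List.range_succ]

lemma comm_Fp_pre {i j : ℕ} (h : j + 1 ≤ i) :
    Commute (heckeGen s n i) (Fp s n j) := by
  refine Commute.list_prod_right _ _ (fun x hx => ?_)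
  obtain ⟨k, hk, rfl⟩ := List.mem_map.1 hx
  rw [List.mem_range] at hk
  exact comm_T_far s n (i := i) (m := k+1) (by omega)

lemma comm_Fp {i : ℕ} (hi : i + 1 ≤ n - 1) :
    ∀ j, i + 1 ≤ j → j ≤ n - 1 → Commute (heckeGen s n i) (Fp s n j) := by
  intro j hj
  induction j, hj using Nat.le_induction with
  | base =>
    intro _
    match i with
    | 0 =>
      have h0 : Fp s n 1 = heckeT s n 1 * heckeT s n 2 := by
        rw [Fp_succ, Fp_zero, heckeT_one, one_mul]
      rw [h0]
      exact comm_TT s n (m := 0) hi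
    | (m+1) =>
      have h0 : Fp s n (m+2) = Fp s n m * (heckeT s n (m+2) * heckeT s n (m+3)) := by
        rw [Fp_succ, Fp_succ, mul_assoc]
      rw [h0]
      exact (comm_Fp_pre s n (by omega)).mul_right (comm_TT s n (m := m+1) hi)
  | succ j hj ih =>
    intro hj1
    rw [Fp_succ]
    exact (ih (by omega)).mul_right
      (comm_T_slide s n (i := i) (M := j+1) (by omega) (by omega))

end FTaux

/-- In the Hecke algebra `Hₙ`, the product `T(2) ⋯ T(n)` (the full twist) is
central: it commutes with every element of `Hₙ`. -/
theorem fullTwist_central (s : Rˣ) (n : ℕ) (hn : 1 ≤ n) (x : Hecke R s n) :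
    (((List.range (n - 1)).map (fun k => heckeT s n (k + 2))).prod) * x
      = x * ((List.range (n - 1)).map (fun k => heckeT s n (k + 2))).prod := by
  have key : ∀ i : Fin (n-1),
      Commute (heckeGen s n i) (FTaux.Fp s n (n-1)) := fun i =>
    FTaux.comm_Fp s n (by have := i.isLt; omega) (n-1) (by have := i.isLt; omega) le_rfl
  have hFp : (((List.range (n - 1)).map (fun k => heckeT s n (k + 2))).prod)
      = FTaux.Fp s n (n-1) := rfl
  rw [hFp]
  obtain ⟨y, rfl⟩ := RingQuot.mkAlgHom_surjective R (HeckeRel R s n) x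
  induction y using FreeAlgebra.induction with
  | grade0 r =>
    rw [AlgHom.commutes]
    exact (Algebra.commutes r _).symm
  | grade1 i =>
    have hg : RingQuot.mkAlgHom R (HeckeRel R s n) (FreeAlgebra.ι R i) = heckeGen s n i := by
      rw [heckeGen, dif_pos i.isLt]
    rw [hg]
    exact ((key i).symm).eq
  | mul a b ha hb =>
    rw [map_mul, ← mul_assoc, ha, mul_assoc, hb, ← mul_assoc]
  | add a b ha hb =>
    rw [map_add, mul_add, add_mul, ha, hb]
end
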